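/- arXiv:1112.5868 — 2 statements merged into one kernel-verified Lean document; each statement's English description precedes it below -/
import Mathlib

section
/- If A ∈ ℂ^{n×n}, n ≥ 2, is a Nekrasov matrix, then ‖(E − (|D|−|L|)⁻¹|U|)⁻¹‖_∞ ≤ 1 / (1 − max_i h_i(A)/|a_ii|). -/
open Matrix

attribute [local instance] Matrix.linftyOpNormedAddCommGroup

/-- Deleted i-th row sum r_i(A). -/
noncomputable def rowSum {n : ℕ} (A : Matrix (Fin n) (Fin n) ℂ) (i : Fin n) : ℝ :=
  ∑ j ∈ Finset.univ.erase i, ‖A i j‖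

/-- Recursive Nekrasov quantities h_i(A). -/
noncomputable def nekH {n : ℕ} (A : Matrix (Fin n) (Fin n) ℂ) : Fin n → ℝ :=
  fun i =>
    (∑ j : {j : Fin n // j < i}, ‖A i j.1‖ * nekH A j.1 / ‖A j.1 j.1‖) +
      ∑ j ∈ Finset.univ.filter (fun j => i < j), ‖A i j‖
  termination_by i => (i : ℕ)
  decreasing_by exact j.2

/-- Recursive quantities z_i(A). -/
noncomputable def nekZ {n : ℕ} (A : Matrix (Fin n) (Fin n) ℂ) : Fin n → ℝ :=
  fun i => (∑ j : {j : Fin n // j < i}, ‖A i j.1‖ / ‖A j.1 j.1‖ * nekZ A j.1) + 1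
  termination_by i => (i : ℕ)
  decreasing_by exact j.2

/-- |D| : entrywise absolute value of the diagonal part. -/
noncomputable def absD {n : ℕ} (A : Matrix (Fin n) (Fin n) ℂ) : Matrix (Fin n) (Fin n) ℝ :=
  Matrix.of fun i j => if i = j then ‖A i j‖ else 0

/-- |L| : entrywise absolute value of the strictly lower triangular part. -/
noncomputable def absL {n : ℕ} (A : Matrix (Fin n) (Fin n) ℂ) : Matrix (Fin n) (Fin n) ℝ :=
  Matrix.of fun i j => if j < i then ‖A i j‖ else 0

/-- |U| : entrywise absolute value of the strictly upper triangular part. -/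
noncomputable def absU {n : ℕ} (A : Matrix (Fin n) (Fin n) ℂ) : Matrix (Fin n) (Fin n) ℝ :=
  Matrix.of fun i j => if i < j then ‖A i j‖ else 0

/-- Comparison matrix ⟨A⟩. -/
noncomputable def cmpM {n : ℕ} (A : Matrix (Fin n) (Fin n) ℂ) : Matrix (Fin n) (Fin n) ℝ :=
  Matrix.of fun i j => if i = j then ‖A i j‖ else -‖A i j‖

lemma finStrongInd {n : ℕ} {P : Fin n → Prop} (h : ∀ i, (∀ j, j < i → P j) → P i) :
    ∀ i, P i := by
  suffices H : ∀ m : ℕ, ∀ i : Fin n, (i : ℕ) < m → P i from fun i => H n i i.2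
  intro m
  induction m with
  | zero => exact fun i hi => absurd hi (Nat.not_lt_zero _)
  | succ m ih =>
    intro i hi
    exact h i fun j hj => ih j (Nat.lt_of_lt_of_le hj (Nat.lt_succ_iff.mp hi))

/-- unfolding of nekH in filter form -/
lemma nekH_eq {n : ℕ} (A : Matrix (Fin n) (Fin n) ℂ) (i : Fin n) :
    nekH A i = (∑ j ∈ Finset.univ.filter (fun j => j < i), ‖A i j‖ * nekH A j / ‖A j j‖) +
      ∑ j ∈ Finset.univ.filter (fun j => i < j), ‖A i j‖ := by
  rw [nekH]
  congr 1
  rw [← Finset.sum_subtype (Finset.univ.filter (fun j => j < i))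
    (fun j => by simp) (fun j => ‖A i j‖ * nekH A j / ‖A j j‖)]

lemma nekH_nonneg {n : ℕ} (A : Matrix (Fin n) (Fin n) ℂ) : ∀ i, 0 ≤ nekH A i := by
  refine finStrongInd fun i ih => ?_
  rw [nekH_eq]
  refine add_nonneg (Finset.sum_nonneg fun j hj => ?_) (Finset.sum_nonneg fun j _ => by positivity)
  have := ih j (Finset.mem_filter.mp hj).2
  positivity

section
variable {n : ℕ} (A : Matrix (Fin n) (Fin n) ℂ)

lemma absM_det : (absD A - absL A).det = ∏ i, ‖A i i‖ := by
  have htri : (absD A - absL A).BlockTriangular OrderDual.toDual := by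
    intro i j hij
    have : i < j := hij
    simp [absD, absL, Matrix.sub_apply, this.ne, not_lt.mpr this.le, asymm this]
  rw [Matrix.det_of_lowerTriangular _ htri]
  refine Finset.prod_congr rfl fun i _ => ?_
  simp [absD, absL, Matrix.sub_apply]

lemma rowM (f : Fin n → ℝ) (i : Fin n) :
    ∑ k, (absD A - absL A) i k * f k
      = ‖A i i‖ * f i - ∑ k ∈ Finset.univ.filter (fun k => k < i), ‖A i k‖ * f k := by
  have : ∀ k, (absD A - absL A) i k * f k
      = (if i = k then ‖A i k‖ * f k else 0) - (if k < i then ‖A i k‖ * f k else 0) := by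
    intro k
    simp only [Matrix.sub_apply, absD, absL, of_apply]
    split_ifs with h1 h2 <;> ring_nf
  simp_rw [this, Finset.sum_sub_distrib, Finset.sum_ite_eq, Finset.mem_univ, if_true,
    Finset.sum_filter]

end

section
variable {n : ℕ} (A : Matrix (Fin n) (Fin n) ℂ) (hNek : ∀ i, nekH A i < ‖A i i‖)
include hNek

lemma aii_pos : ∀ i, 0 < ‖A i i‖ := fun i => lt_of_le_of_lt (nekH_nonneg A i) (hNek i)

lemma detUnit : IsUnit (absD A - absL A).det := by
  rw [absM_det]
  exact isUnit_iff_ne_zero.mpr (Finset.prod_pos fun i _ => aii_pos A hNek i).ne'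

lemma entry_rec : ∀ i j, ‖A i i‖ * ((absD A - absL A)⁻¹ * absU A) i j
    = absU A i j + ∑ k ∈ Finset.univ.filter (fun k => k < i),
        ‖A i k‖ * ((absD A - absL A)⁻¹ * absU A) k j := by
  intro i j
  have hMC : (absD A - absL A) * ((absD A - absL A)⁻¹ * absU A) = absU A := by
    rw [← Matrix.mul_assoc, Matrix.mul_nonsing_inv _ (detUnit A hNek), Matrix.one_mul]
  have := congrFun (congrFun (congrArg (fun M => M) hMC) i) j
  have h2 : ∑ k, (absD A - absL A) i k * ((absD A - absL A)⁻¹ * absU A) k j = absU A i j := by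
    rw [← Matrix.mul_apply]; exact congrFun (congrFun hMC i) j
  rw [rowM A (fun k => ((absD A - absL A)⁻¹ * absU A) k j) i] at h2
  linarith [h2]

lemma C_nonneg : ∀ i, ∀ j, 0 ≤ ((absD A - absL A)⁻¹ * absU A) i j := by
  refine finStrongInd fun i ih => fun j => ?_
  have h := entry_rec A hNek i j
  have hU : 0 ≤ absU A i j := by simp only [absU, of_apply]; positivity
  have hs : 0 ≤ ∑ k ∈ Finset.univ.filter (fun k => k < i),
      ‖A i k‖ * ((absD A - absL A)⁻¹ * absU A) k j := by
    refine Finset.sum_nonneg fun k hk => ?_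
    have := ih k (Finset.mem_filter.mp hk).2 j
    positivity
  nlinarith [aii_pos A hNek i]

lemma C_rowsum : ∀ i, ∑ j, ((absD A - absL A)⁻¹ * absU A) i j = nekH A i / ‖A i i‖ := by
  refine finStrongInd fun i ih => ?_
  have key : ‖A i i‖ * ∑ j, ((absD A - absL A)⁻¹ * absU A) i j = nekH A i := by
    rw [Finset.mul_sum]
    simp_rw [entry_rec A hNek i]
    rw [Finset.sum_add_distrib, nekH_eq]
    rw [Finset.sum_comm]
    simp_rw [← Finset.mul_sum]
    rw [add_comm]
    congr 1
    · refine Finset.sum_congr rfl fun k hk => ?_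
      rw [ih k (Finset.mem_filter.mp hk).2]
      ring
    · rw [Finset.sum_filter]
      refine Finset.sum_congr rfl fun j _ => ?_
      simp [absU]
  rw [eq_div_iff (aii_pos A hNek i).ne']
  linear_combination key

end

section RingNorm
attribute [local instance] Matrix.linftyOpNormedRing

theorem stmt6aux {n : ℕ} (hn : 2 ≤ n) (A : Matrix (Fin n) (Fin n) ℂ)
    (hNek : ∀ i, nekH A i < ‖A i i‖) :
    ‖((1 : Matrix (Fin n) (Fin n) ℝ) - (absD A - absL A)⁻¹ * absU A)⁻¹‖
      ≤ 1 / (1 - ⨆ i, nekH A i / ‖A i i‖) := by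
  have : Nonempty (Fin n) := Fin.pos_iff_nonempty.mp (by omega)
  set C := (absD A - absL A)⁻¹ * absU A with hC
  set θ := ⨆ i, nekH A i / ‖A i i‖ with hθ
  have hbdd : BddAbove (Set.range fun i => nekH A i / ‖A i i‖) := Set.Finite.bddAbove (Set.finite_range _)
  have hθi : ∀ i, nekH A i / ‖A i i‖ ≤ θ := fun i => le_ciSup hbdd i
  have hθ0 : 0 ≤ θ := le_trans (div_nonneg (nekH_nonneg A (Classical.arbitrary _))
    (norm_nonneg _)) (hθi _)
  have hθ1 : θ < 1 := by
    obtain ⟨i0, hi0⟩ := exists_eq_ciSup_of_finite (f := fun i => nekH A i / ‖A i i‖)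
    rw [hθ, ← hi0]
    exact (div_lt_one (aii_pos A hNek i0)).mpr (hNek i0)
  have hCle : ‖C‖ ≤ θ := by
    rw [Matrix.linfty_opNorm_def]
    have : ∀ i, ((∑ j, ‖C i j‖₊ : NNReal) : ℝ) ≤ θ := by
      intro i
      push_cast
      have : ∀ j, ‖C i j‖ = C i j := fun j => Real.norm_of_nonneg (C_nonneg A hNek i j)
      simp_rw [this]
      rw [C_rowsum A hNek i]
      exact hθi i
    calc ((Finset.univ.sup fun i => ∑ j, ‖C i j‖₊ : NNReal) : ℝ)
        ≤ ((⟨θ, hθ0⟩ : NNReal) : ℝ) := by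
          exact_mod_cast NNReal.coe_le_coe.mpr (Finset.sup_le fun i _ =>
            NNReal.coe_le_coe.mp (this i))
      _ = θ := rfl
  have hC1 : ‖C‖ < 1 := lt_of_le_of_lt hCle hθ1
  letI : NormedSpace ℝ (Matrix (Fin n) (Fin n) ℝ) := Matrix.linftyOpNormedSpace
  haveI : CompleteSpace (Matrix (Fin n) (Fin n) ℝ) := FiniteDimensional.complete ℝ _
  rw [Matrix.nonsing_inv_eq_ringInverse, ← geom_series_eq_inverse C hC1]
  have hgeom : Summable fun i : ℕ => ‖C‖ ^ i := summable_geometric_of_lt_one (norm_nonneg C) hC1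
  have hb : ∀ i, ‖C ^ i‖ ≤ ‖C‖ ^ i := fun i => norm_pow_le C i
  have h1θ : 0 < 1 - θ := by linarith
  calc ‖∑' i : ℕ, C ^ i‖ ≤ ∑' i : ℕ, ‖C ^ i‖ :=
        norm_tsum_le_tsum_norm (hgeom.of_nonneg_of_le (fun i => norm_nonneg _) hb)
    _ ≤ ∑' i : ℕ, ‖C‖ ^ i :=
        Summable.tsum_le_tsum hb (hgeom.of_nonneg_of_le (fun i => norm_nonneg _) hb) hgeom
    _ = (1 - ‖C‖)⁻¹ := tsum_geometric_of_lt_one (norm_nonneg C) hC1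
    _ ≤ (1 - θ)⁻¹ := by
        apply inv_anti₀ h1θ
        linarith
    _ = 1 / (1 - θ) := (one_div _).symm

end RingNorm

/-- For a Nekrasov matrix, ‖(E − (|D|−|L|)⁻¹|U|)⁻¹‖_∞ ≤ 1/(1 − max_i h_i(A)/|a_ii|). -/
theorem stmt6 {n : ℕ} (hn : 2 ≤ n) (A : Matrix (Fin n) (Fin n) ℂ)
    (hNek : ∀ i, nekH A i < ‖A i i‖) :
    ‖((1 : Matrix (Fin n) (Fin n) ℝ) - (absD A - absL A)⁻¹ * absU A)⁻¹‖
      ≤ 1 / (1 - ⨆ i, nekH A i / ‖A i i‖) :=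
  stmt6aux hn A hNek
end

section
/- For A ∈ ℂ^{n×n} with nonzero diagonal, the vector y := (|D|−|L|)⁻¹ e satisfies y_i = z_i(A)/|a_ii| for all i, where z_1(A) = 1 and z_i(A) = Σ_{j<i} (|a_ij|/|a_jj|) z_j(A) + 1 for i ≥ 2. Consequently ‖(|D|−|L|)⁻¹‖_∞ = max_i z_i(A)/|a_ii|. -/
open Matrix

attribute [local instance] Matrix.linftyOpNormedAddCommGroup

/-- mulVec formula for `|D| - |L|`. -/
lemma dl_mulVec_apply {n : ℕ} (A : Matrix (Fin n) (Fin n) ℂ) (x : Fin n → ℝ) (i : Fin n) :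
    ((absD A - absL A) *ᵥ x) i
      = ‖A i i‖ * x i - ∑ j ∈ Finset.univ.filter (· < i), ‖A i j‖ * x j := by
  simp only [mulVec, dotProduct, Matrix.sub_apply, absD, absL, of_apply, sub_mul,
    Finset.sum_sub_distrib, ite_mul, zero_mul]
  rw [Finset.sum_ite_eq Finset.univ i (fun j => ‖A i j‖ * x j), Finset.sum_filter]
  simp

lemma nekZ_eq_filter {n : ℕ} (A : Matrix (Fin n) (Fin n) ℂ) (i : Fin n) :
    nekZ A i = (∑ j ∈ Finset.univ.filter (· < i), ‖A i j‖ / ‖A j j‖ * nekZ A j) + 1 := by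
  rw [nekZ]
  congr 1
  exact (Finset.sum_subtype (p := fun j => j < i) (Finset.univ.filter (· < i)) (by simp)
    (fun j => ‖A i j‖ / ‖A j j‖ * nekZ A j)).symm

/-- `|D| - |L|` is lower triangular. -/
lemma dl_blockTriangular {n : ℕ} (A : Matrix (Fin n) (Fin n) ℂ) :
    (absD A - absL A).BlockTriangular OrderDual.toDual := by
  intro i j h
  have h' : i < j := h
  simp [absD, absL, h'.ne, not_lt_of_gt h']

lemma dl_det_isUnit {n : ℕ} (A : Matrix (Fin n) (Fin n) ℂ)
    (hdiag : ∀ i, A i i ≠ 0) : IsUnit (absD A - absL A).det := by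
  rw [Matrix.det_of_lowerTriangular _ (dl_blockTriangular A)]
  refine (Finset.prod_ne_zero_iff.2 fun i _ => ?_).isUnit
  simp [absD, absL, Matrix.sub_apply, norm_ne_zero_iff, hdiag i]

/-- Forward substitution positivity. -/
lemma dl_mulVec_nonneg {n : ℕ} (A : Matrix (Fin n) (Fin n) ℂ)
    (hdiag : ∀ i, A i i ≠ 0) (x : Fin n → ℝ)
    (hb : ∀ i, 0 ≤ ((absD A - absL A) *ᵥ x) i) : ∀ i, 0 ≤ x i := by
  have key : ∀ m : ℕ, ∀ i : Fin n, (i : ℕ) = m → 0 ≤ x i := by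
    intro m
    induction m using Nat.strong_induction_on with
    | _ m ih =>
      intro i him
      have hpos : 0 < ‖A i i‖ := norm_pos_iff.2 (hdiag i)
      have h := hb i
      rw [dl_mulVec_apply] at h
      have hsum : 0 ≤ ∑ j ∈ Finset.univ.filter (· < i), ‖A i j‖ * x j := by
        refine Finset.sum_nonneg fun j hj => ?_
        have hji : j < i := by simpa using hj
        exact mul_nonneg (norm_nonneg _) (ih j (him ▸ hji) j rfl)
      nlinarith
  exact fun i => key i i rfl

/-- y := (|D|−|L|)⁻¹ e satisfies y_i = z_i(A)/|a_ii|, and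
    ‖(|D|−|L|)⁻¹‖_∞ = max_i z_i(A)/|a_ii|. -/
theorem stmt8 {n : ℕ} (A : Matrix (Fin n) (Fin n) ℂ)
    (hdiag : ∀ i, A i i ≠ 0) :
    (∀ i, ((absD A - absL A)⁻¹ *ᵥ (1 : Fin n → ℝ)) i = nekZ A i / ‖A i i‖) ∧
    ‖(absD A - absL A)⁻¹‖ = ⨆ i, nekZ A i / ‖A i i‖ := by
  have hdet := dl_det_isUnit A hdiag
  have hnorm : ∀ i, ‖A i i‖ ≠ 0 := fun i => norm_ne_zero_iff.2 (hdiag i)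
  let y : Fin n → ℝ := fun i => nekZ A i / ‖A i i‖
  have hTy : (absD A - absL A) *ᵥ y = 1 := by
    funext i
    rw [dl_mulVec_apply, Pi.one_apply]
    have h1 : ‖A i i‖ * y i = nekZ A i := by
      show ‖A i i‖ * (nekZ A i / ‖A i i‖) = nekZ A i
      rw [mul_div_assoc']
      exact mul_div_cancel_left₀ _ (hnorm i)
    have h2 : ∀ j, ‖A i j‖ * y j = ‖A i j‖ / ‖A j j‖ * nekZ A j := by
      intro j
      show ‖A i j‖ * (nekZ A j / ‖A j j‖) = _
      ring
    rw [h1]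
    simp_rw [h2]
    rw [nekZ_eq_filter]
    ring
  have hpart1 : (absD A - absL A)⁻¹ *ᵥ (1 : Fin n → ℝ) = y := by
    calc (absD A - absL A)⁻¹ *ᵥ (1 : Fin n → ℝ)
        = (absD A - absL A)⁻¹ *ᵥ ((absD A - absL A) *ᵥ y) := by rw [hTy]
    _ = ((absD A - absL A)⁻¹ * (absD A - absL A)) *ᵥ y := Matrix.mulVec_mulVec _ _ _
    _ = y := by rw [Matrix.nonsing_inv_mul _ hdet, Matrix.one_mulVec]
  have hinv_nonneg : ∀ i j, 0 ≤ (absD A - absL A)⁻¹ i j := by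
    intro i j
    refine dl_mulVec_nonneg A hdiag (fun k => (absD A - absL A)⁻¹ k j) (fun k => ?_) i
    have : ((absD A - absL A) *ᵥ fun k => (absD A - absL A)⁻¹ k j) k = ((absD A - absL A) * (absD A - absL A)⁻¹) k j := by
      simp [Matrix.mulVec, Matrix.mul_apply, dotProduct]
    rw [this, Matrix.mul_nonsing_inv _ hdet]
    by_cases hkj : k = j <;> simp [Matrix.one_apply, hkj]
  refine ⟨fun i => congrFun hpart1 i, ?_⟩
  rw [Matrix.linfty_opNorm_def]
  have hrow : ∀ i, ((∑ j, ‖(absD A - absL A)⁻¹ i j‖₊ : NNReal) : ℝ) = y i := by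
    intro i
    push_cast
    have : ∀ j, (‖(absD A - absL A)⁻¹ i j‖ : ℝ) = (absD A - absL A)⁻¹ i j := fun j =>
      (Real.norm_of_nonneg (hinv_nonneg i j))
    simp_rw [this]
    have := congrFun hpart1 i
    rw [Matrix.mulVec, dotProduct] at this
    simpa using this
  rw [Finset.sup_univ_eq_ciSup, NNReal.coe_iSup]
  exact iSup_congr hrow
end
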